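/- arXiv:1612.02651 — 2 statements merged into one kernel-verified Lean document; each statement's English description precedes it below -/
import Mathlib

section
/- Let G be a non-abelian τ₂-group such that every ring of scalars of G is isomorphic, as a ring, to ℤ. Then G cannot be decomposed as a direct product of non-abelian subgroups: G is not isomorphic to H × K for any two non-abelian groups H and K. -/
open scoped commutatorElement

noncomputable def grpRank (G : Type*) [Group G] : ℕ :=
  sInf {k : ℕ | ∃ S : Finset G, S.card = k ∧ Subgroup.closure (S : Set G) = ⊤}

def IsTau2 (G : Type*) [Group G] : Prop :=
  Group.FG G ∧ (∀ g : G, g ≠ 1 → ¬IsOfFinOrder g) ∧ ∀ g h : G, ⁅g, h⁆ ∈ Subgroup.center G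

def prodPow {G : Type*} [Group G] {k : ℕ} (v : Fin k → G) (e : Fin k → ℤ) : G :=
  (List.ofFn fun i => v i ^ e i).prod

def tau2Rels (n m : ℕ) (lam : Fin m → Fin n → Fin n → ℤ) :
    Set (FreeGroup (Fin n ⊕ Fin m)) :=
  {r | (∃ i j : Fin n, i < j ∧
          r = ⁅(FreeGroup.of (Sum.inl i) : FreeGroup (Fin n ⊕ Fin m)),
              FreeGroup.of (Sum.inl j)⁆ *
              (prodPow (fun t : Fin m => FreeGroup.of (Sum.inr t)) (fun t => lam t i j))⁻¹) ∨
       (∃ (i : Fin n) (t : Fin m), r = ⁅(FreeGroup.of (Sum.inl i) : FreeGroup (Fin n ⊕ Fin m)),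
              FreeGroup.of (Sum.inr t)⁆) ∨
       (∃ t s : Fin m, r = ⁅(FreeGroup.of (Sum.inr t) : FreeGroup (Fin n ⊕ Fin m)),
              FreeGroup.of (Sum.inr s)⁆)}

def Tau2Group (n m : ℕ) (lam : Fin m → Fin n → Fin n → ℤ) : Type :=
  PresentedGroup (tau2Rels n m lam)

instance (n m : ℕ) (lam : Fin m → Fin n → Fin n → ℤ) : Group (Tau2Group n m lam) :=
  inferInstanceAs (Group (PresentedGroup (tau2Rels n m lam)))

def tau2a {n m : ℕ} {lam : Fin m → Fin n → Fin n → ℤ} (i : Fin n) : Tau2Group n m lam :=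
  PresentedGroup.of (Sum.inl i)

def tau2c {n m : ℕ} {lam : Fin m → Fin n → Fin n → ℤ} (t : Fin m) : Tau2Group n m lam :=
  PresentedGroup.of (Sum.inr t)

def IsCSmall {G : Type*} [Group G] (g : G) : Prop :=
  ∀ x : G, x ∈ Subgroup.centralizer {g} ↔
    ∃ (t : ℤ) (z : G), z ∈ Subgroup.center G ∧ x = g ^ t * z

def IsMalcevBasis {G : Type*} [Group G] {n m : ℕ} (a : Fin n → G) (c : Fin m → G) : Prop :=
  (∀ t, c t ∈ Subgroup.center G) ∧
  (commutator G ≤ Subgroup.closure (Set.range c)) ∧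
  (∀ g : G, ∃! p : (Fin n → ℤ) × (Fin m → ℤ), g = prodPow a p.1 * prodPow c p.2)

lemma mem_commutator_self {G : Type*} [Group G] (g h : G) : ⁅g, h⁆ ∈ commutator G := by
  rw [commutator_def]
  exact Subgroup.commutator_mem_commutator (Subgroup.mem_top g) (Subgroup.mem_top h)

/-- A ring of scalars of a τ₂-group G: a commutative ring R acting faithfully by
(additive, i.e. multiplicative in the group notation) endomorphisms on the abelian
groups G/Z(G) and G', compatibly with the bilinear map induced by the commutator:
f(r·x, y) = f(x, r·y) = r·f(x, y). -/
structure RingOfScalarsOn (R : Type*) (G : Type*) [CommRing R] [Group G] where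
  actQ : R → (G ⧸ Subgroup.center G) → (G ⧸ Subgroup.center G)
  actN : R → ↥(commutator G) → ↥(commutator G)
  actQ_map_mul : ∀ r x y, actQ r (x * y) = actQ r x * actQ r y
  actN_map_mul : ∀ r x y, actN r (x * y) = actN r x * actN r y
  actQ_one : ∀ x, actQ 1 x = x
  actN_one : ∀ x, actN 1 x = x
  actQ_add : ∀ r s x, actQ (r + s) x = actQ r x * actQ s x
  actN_add : ∀ r s x, actN (r + s) x = actN r x * actN s x
  actQ_mul : ∀ r s x, actQ (r * s) x = actQ r (actQ s x)
  actN_mul : ∀ r s x, actN (r * s) x = actN r (actN s x)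
  actQ_faithful : ∀ r s : R, (∀ x, actQ r x = actQ s x) → r = s
  actN_faithful : ∀ r s : R, (∀ x, actN r x = actN s x) → r = s
  compat_left : ∀ (r : R) (g h g' : G),
    (QuotientGroup.mk g' : G ⧸ Subgroup.center G) = actQ r (QuotientGroup.mk g) →
    actN r ⟨⁅g, h⁆, mem_commutator_self g h⟩ = ⟨⁅g', h⁆, mem_commutator_self g' h⟩
  compat_right : ∀ (r : R) (g h h' : G),
    (QuotientGroup.mk h' : G ⧸ Subgroup.center G) = actQ r (QuotientGroup.mk h) →
    actN r ⟨⁅g, h⁆, mem_commutator_self g h⟩ = ⟨⁅g, h'⁆, mem_commutator_self g h'⟩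

/-!
If `G ≅ H × K`, the two projections induce orthogonal idempotent endomorphisms `π_H`, `π_K`
of `G/Z(G)` and of `G'`, compatible with the commutator map because the factors commute
elementwise. Letting `(a, b)` act as `π_H^a π_K^b` makes `ℤ × ℤ` a ring of scalars of `G`;
it acts faithfully because `G` is torsion-free and both factors are non-abelian, so both
idempotents survive on `G/Z(G)` and on `G'`. But `ℤ × ℤ` has zero divisors, so it is not
isomorphic to `ℤ`.
-/

section Commutator

variable {G : Type*} [Group G]

lemma commutatorElement_eq_of_mk_center_eq_left {g g' : G}
    (hg : (g : G ⧸ Subgroup.center G) = g') (h : G) : ⁅g, h⁆ = ⁅g', h⁆ := by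
  obtain ⟨z, hz, rfl⟩ : ∃ z ∈ Subgroup.center G, g' = g * z :=
    ⟨g⁻¹ * g', QuotientGroup.eq.mp hg, by group⟩
  rw [commutatorElement_mul_left_eq_conj_mul,
    commutatorElement_eq_one_iff_commute.mpr (Subgroup.mem_center_iff.mp hz h).symm]
  group

lemma commutatorElement_eq_of_mk_center_eq_right {h h' : G}
    (hh : (h : G ⧸ Subgroup.center G) = h') (g : G) : ⁅g, h⁆ = ⁅g, h'⁆ := by
  obtain ⟨z, hz, rfl⟩ : ∃ z ∈ Subgroup.center G, h' = h * z :=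
    ⟨h⁻¹ * h', QuotientGroup.eq.mp hh, by group⟩
  rw [commutatorElement_mul_right_eq_mul_conj,
    commutatorElement_eq_one_iff_commute.mpr (Subgroup.mem_center_iff.mp hz g)]
  group

lemma commutator_le_comap (f : G →* G) : commutator G ≤ (commutator G).comap f := by
  rw [← Subgroup.map_le_iff_le_comap, map_commutator_eq, commutator_def]
  exact Subgroup.commutator_mono le_top le_top

variable (hc : ∀ g h : G, ⁅g, h⁆ ∈ Subgroup.center G)
include hc

lemma commutatorElement_mul_left_of_central (a b c : G) : ⁅a * b, c⁆ = ⁅a, c⁆ * ⁅b, c⁆ := by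
  rw [commutatorElement_mul_left_eq_conj_mul, Subgroup.mem_center_iff.mp (hc b c) a,
    mul_inv_cancel_right]
  exact (Subgroup.mem_center_iff.mp (hc b c) _).symm

lemma commutatorElement_mul_right_of_central (a b c : G) : ⁅a, b * c⁆ = ⁅a, b⁆ * ⁅a, c⁆ := by
  rw [commutatorElement_mul_right_eq_mul_conj, mul_assoc _ b,
    Subgroup.mem_center_iff.mp (hc a c) b, mul_assoc, mul_inv_cancel_right]

lemma commutatorElement_zpow_left_of_central (g h : G) (n : ℤ) : ⁅g ^ n, h⁆ = ⁅g, h⁆ ^ n :=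
  map_zpow (MonoidHom.mk' (⁅·, h⁆) fun a b => commutatorElement_mul_left_of_central hc a b h) g n

lemma commutatorElement_zpow_right_of_central (g h : G) (n : ℤ) : ⁅g, h ^ n⁆ = ⁅g, h⁆ ^ n :=
  map_zpow (MonoidHom.mk' (⁅g, ·⁆) fun a b => commutatorElement_mul_right_of_central hc g a b) h n

lemma commute_of_quotient_center (x y : G ⧸ Subgroup.center G) : Commute x y := by
  induction x using QuotientGroup.induction_on with | H a =>
  induction y using QuotientGroup.induction_on with | H b =>
  rw [← commutatorElement_eq_one_iff_commute]
  exact (map_commutatorElement (QuotientGroup.mk' _) a b).symm.trans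
    ((QuotientGroup.eq_one_iff _).mpr (hc a b))

lemma commute_of_commutator (x y : commutator G) : Commute x y := by
  have hle : commutator G ≤ Subgroup.center G :=
    Subgroup.commutator_le.mpr fun g _ h _ => hc g h
  exact Subtype.ext (Subgroup.mem_center_iff.mp (hle x.2) y).symm

lemma not_isOfFinOrder_mk_center (hTF : ∀ g : G, g ≠ 1 → ¬IsOfFinOrder g) {g h : G}
    (hgh : ¬Commute g h) : ¬IsOfFinOrder (g : G ⧸ Subgroup.center G) := by
  rw [isOfFinOrder_iff_zpow_eq_one]
  rintro ⟨n, hn, hgn⟩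
  rw [← QuotientGroup.mk_zpow, QuotientGroup.eq_one_iff] at hgn
  refine hTF _ (mt commutatorElement_eq_one_iff_commute.mp hgh)
    (isOfFinOrder_iff_zpow_eq_one.mpr ⟨n, hn, ?_⟩)
  rw [← commutatorElement_zpow_left_of_central hc, commutatorElement_eq_one_iff_commute]
  exact (Subgroup.mem_center_iff.mp hgn h).symm

end Commutator

/-- An internal direct product decomposition of `G`, given by its two projections. -/
structure DirectSplitting (G : Type*) [Group G] where
  fst : G →* G
  snd : G →* G
  fst_mul_snd (g : G) : fst g * snd g = g
  fst_snd (g : G) : fst (snd g) = 1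
  snd_fst (g : G) : snd (fst g) = 1
  commute_fst_snd (a b : G) : Commute (fst a) (snd b)

namespace DirectSplitting

variable {G : Type*} [Group G] (d : DirectSplitting G)

def symm : DirectSplitting G where
  fst := d.snd
  snd := d.fst
  fst_mul_snd g := (d.commute_fst_snd g g).eq.symm.trans (d.fst_mul_snd g)
  fst_snd := d.snd_fst
  snd_fst := d.fst_snd
  commute_fst_snd a b := (d.commute_fst_snd b a).symm

lemma fst_fst (g : G) : d.fst (d.fst g) = d.fst g := by
  conv_rhs => rw [← d.fst_mul_snd g]
  rw [map_mul, d.fst_snd, mul_one]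

lemma snd_snd (g : G) : d.snd (d.snd g) = d.snd g := d.symm.fst_fst g

lemma fst_mem_center {g : G} (hg : g ∈ Subgroup.center G) : d.fst g ∈ Subgroup.center G := by
  refine Subgroup.mem_center_iff.mpr fun x => ?_
  have hfst : Commute (d.fst x) (d.fst g) := by
    simpa only [fst_fst] using
      (show Commute (d.fst x) g from Subgroup.mem_center_iff.mp hg _).map d.fst
  conv_lhs => rw [← d.fst_mul_snd x]
  conv_rhs => rw [← d.fst_mul_snd x]
  exact (hfst.mul_left (d.commute_fst_snd g x).symm).eq

lemma snd_mem_center {g : G} (hg : g ∈ Subgroup.center G) : d.snd g ∈ Subgroup.center G :=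
  d.symm.fst_mem_center hg

lemma fst_commutatorElement_left (g h : G) : d.fst ⁅g, h⁆ = ⁅d.fst g, h⁆ := by
  conv_rhs => rw [← d.fst_mul_snd h]
  rw [map_commutatorElement, commutatorElement_mul_right_eq_mul_conj,
    commutatorElement_eq_one_iff_commute.mpr (d.commute_fst_snd g h)]
  group

lemma snd_commutatorElement_left (g h : G) : d.snd ⁅g, h⁆ = ⁅d.snd g, h⁆ :=
  d.symm.fst_commutatorElement_left g h

lemma fst_commutatorElement_right (g h : G) : d.fst ⁅g, h⁆ = ⁅g, d.fst h⁆ := by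
  conv_rhs => rw [← d.fst_mul_snd g]
  rw [map_commutatorElement, commutatorElement_mul_left_eq_conj_mul,
    commutatorElement_eq_one_iff_commute.mpr (d.commute_fst_snd h g).symm]
  group

lemma snd_commutatorElement_right (g h : G) : d.snd ⁅g, h⁆ = ⁅g, d.snd h⁆ :=
  d.symm.fst_commutatorElement_right g h

def subgroup (N : Subgroup G) (hfst : N ≤ N.comap d.fst) (hsnd : N ≤ N.comap d.snd) :
    DirectSplitting N where
  fst := (d.fst.comp N.subtype).codRestrict N fun x => hfst x.2
  snd := (d.snd.comp N.subtype).codRestrict N fun x => hsnd x.2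
  fst_mul_snd g := Subtype.ext (d.fst_mul_snd g)
  fst_snd g := Subtype.ext (d.fst_snd g)
  snd_fst g := Subtype.ext (d.snd_fst g)
  commute_fst_snd a b := Subtype.ext (d.commute_fst_snd a b)

def quotient (N : Subgroup G) [N.Normal] (hfst : N ≤ N.comap d.fst)
    (hsnd : N ≤ N.comap d.snd) : DirectSplitting (G ⧸ N) where
  fst := QuotientGroup.map N N d.fst hfst
  snd := QuotientGroup.map N N d.snd hsnd
  fst_mul_snd x := by
    induction x using QuotientGroup.induction_on with | H g =>
    exact congrArg _ (d.fst_mul_snd g)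
  fst_snd x := by
    induction x using QuotientGroup.induction_on with | H g =>
    exact congrArg _ (d.fst_snd g)
  snd_fst x := by
    induction x using QuotientGroup.induction_on with | H g =>
    exact congrArg _ (d.snd_fst g)
  commute_fst_snd x y := by
    induction x using QuotientGroup.induction_on with | H a =>
    induction y using QuotientGroup.induction_on with | H b =>
    exact congrArg _ (d.commute_fst_snd a b).eq

def scale (r : ℤ × ℤ) (x : G) : G := d.fst x ^ r.1 * d.snd x ^ r.2

lemma one_scale (x : G) : d.scale 1 x = x := by
  simp only [scale, Prod.fst_one, Prod.snd_one, zpow_one, fst_mul_snd]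

lemma mul_scale (r s : ℤ × ℤ) (x : G) : d.scale (r * s) x = d.scale r (d.scale s x) := by
  simp only [scale, map_mul, map_zpow, fst_fst, snd_snd, fst_snd, snd_fst, one_zpow, mul_one,
    one_mul, Prod.fst_mul, Prod.snd_mul, ← zpow_mul, mul_comm r.1, mul_comm r.2]

lemma scale_fst (r : ℤ × ℤ) (x : G) : d.scale r (d.fst x) = d.fst x ^ r.1 := by
  simp only [scale, fst_fst, snd_fst, one_zpow, mul_one]

lemma scale_snd (r : ℤ × ℤ) (x : G) : d.scale r (d.snd x) = d.snd x ^ r.2 := by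
  simp only [scale, snd_snd, fst_snd, one_zpow, one_mul]

lemma eq_of_scale_eq {x y : G} (hx : ¬IsOfFinOrder (d.fst x)) (hy : ¬IsOfFinOrder (d.snd y))
    {r s : ℤ × ℤ} (h : ∀ z, d.scale r z = d.scale s z) : r = s := by
  refine Prod.ext (injective_zpow_iff_not_isOfFinOrder.mpr hx ?_)
    (injective_zpow_iff_not_isOfFinOrder.mpr hy ?_)
  · simpa only [scale_fst] using h (d.fst x)
  · simpa only [scale_snd] using h (d.snd y)

section Abelian

variable (hA : ∀ x y : G, Commute x y)
include hA

lemma scale_mul (r : ℤ × ℤ) (x y : G) : d.scale r (x * y) = d.scale r x * d.scale r y := by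
  simp only [scale, map_mul, (hA _ _).mul_zpow]
  exact (hA _ _).mul_mul_mul_comm _ _

lemma add_scale (r s : ℤ × ℤ) (x : G) : d.scale (r + s) x = d.scale r x * d.scale s x := by
  simp only [scale, Prod.fst_add, Prod.snd_add, zpow_add]
  exact (hA _ _).mul_mul_mul_comm _ _

end Abelian

lemma quotient_scale_mk (N : Subgroup G) [N.Normal] (hfst : N ≤ N.comap d.fst)
    (hsnd : N ≤ N.comap d.snd) (r : ℤ × ℤ) (g : G) :
    (d.quotient N hfst hsnd).scale r (g : G ⧸ N) = (d.scale r g : G ⧸ N) := by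
  simp only [scale, quotient, QuotientGroup.map_mk, QuotientGroup.mk_mul, QuotientGroup.mk_zpow]

section ClassTwo

variable (hc : ∀ g h : G, ⁅g, h⁆ ∈ Subgroup.center G)
include hc

lemma scale_commutatorElement_left (r : ℤ × ℤ) (g h : G) :
    d.scale r ⁅g, h⁆ = ⁅d.scale r g, h⁆ := by
  unfold scale
  rw [commutatorElement_mul_left_of_central hc, commutatorElement_zpow_left_of_central hc,
    commutatorElement_zpow_left_of_central hc, fst_commutatorElement_left,
    snd_commutatorElement_left]

lemma scale_commutatorElement_right (r : ℤ × ℤ) (g h : G) :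
    d.scale r ⁅g, h⁆ = ⁅g, d.scale r h⁆ := by
  unfold scale
  rw [commutatorElement_mul_right_of_central hc,
    commutatorElement_zpow_right_of_central hc, commutatorElement_zpow_right_of_central hc,
    fst_commutatorElement_right, snd_commutatorElement_right]

def toRingOfScalarsOn (hTF : ∀ g : G, g ≠ 1 → ¬IsOfFinOrder g)
    (hfst : ∃ a b, ¬Commute (d.fst a) (d.fst b)) (hsnd : ∃ a b, ¬Commute (d.snd a) (d.snd b)) :
    RingOfScalarsOn (ℤ × ℤ) G :=
  let Q := d.quotient (Subgroup.center G) (fun _ => d.fst_mem_center) (fun _ => d.snd_mem_center)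
  let N := d.subgroup (commutator G) (commutator_le_comap d.fst) (commutator_le_comap d.snd)
  { actQ := Q.scale
    actN := N.scale
    actQ_map_mul := Q.scale_mul (commute_of_quotient_center hc)
    actN_map_mul := N.scale_mul (commute_of_commutator hc)
    actQ_one := Q.one_scale
    actN_one := N.one_scale
    actQ_add := Q.add_scale (commute_of_quotient_center hc)
    actN_add := N.add_scale (commute_of_commutator hc)
    actQ_mul := Q.mul_scale
    actN_mul := N.mul_scale
    actQ_faithful := fun r s h => by
      obtain ⟨a, b, hab⟩ := hfst
      obtain ⟨a', b', hab'⟩ := hsnd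
      exact Q.eq_of_scale_eq (x := a) (y := a') (not_isOfFinOrder_mk_center hc hTF hab)
        (not_isOfFinOrder_mk_center hc hTF hab') h
    actN_faithful := fun r s h => by
      obtain ⟨a, b, hab⟩ := hfst
      obtain ⟨a', b', hab'⟩ := hsnd
      refine N.eq_of_scale_eq (x := ⟨⁅a, b⁆, mem_commutator_self a b⟩)
        (y := ⟨⁅a', b'⁆, mem_commutator_self a' b'⟩)
        (fun hfin => hTF _ ?_ ((commutator G).subtype.isOfFinOrder hfin))
        (fun hfin => hTF _ ?_ ((commutator G).subtype.isOfFinOrder hfin)) h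
      · exact map_commutatorElement d.fst a b ▸ mt commutatorElement_eq_one_iff_commute.mp hab
      · exact map_commutatorElement d.snd a' b' ▸ mt commutatorElement_eq_one_iff_commute.mp hab'
    compat_left := fun r g h g' hg' => Subtype.ext <|
      (d.scale_commutatorElement_left hc r g h).trans <| commutatorElement_eq_of_mk_center_eq_left
        (hg'.trans (d.quotient_scale_mk _ _ _ r g)).symm h
    compat_right := fun r g h h' hh' => Subtype.ext <|
      (d.scale_commutatorElement_right hc r g h).trans <| commutatorElement_eq_of_mk_center_eq_right
        (hh'.trans (d.quotient_scale_mk _ _ _ r h)).symm g }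

end ClassTwo

section Prod

variable {H K : Type*} [Group H] [Group K]

def ofMulEquiv (e : G ≃* H × K) : DirectSplitting G where
  fst := (e.symm : H × K →* G).comp ((MonoidHom.inl H K).comp ((MonoidHom.fst H K).comp e))
  snd := (e.symm : H × K →* G).comp ((MonoidHom.inr H K).comp ((MonoidHom.snd H K).comp e))
  fst_mul_snd g := e.injective <| by simp
  fst_snd g := e.injective <| by simp
  snd_fst g := e.injective <| by simp
  commute_fst_snd a b := e.injective <| by simp

lemma exists_not_commute_ofMulEquiv_fst (e : G ≃* H × K) (hH : ∃ h₁ h₂ : H, h₁ * h₂ ≠ h₂ * h₁) :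
    ∃ a b : G, ¬Commute ((ofMulEquiv e).fst a) ((ofMulEquiv e).fst b) := by
  obtain ⟨h₁, h₂, hne⟩ := hH
  refine ⟨e.symm (h₁, 1), e.symm (h₂, 1), fun hcomm => hne ?_⟩
  simpa [ofMulEquiv] using congrArg (fun x => (e x).1) hcomm.eq

lemma exists_not_commute_ofMulEquiv_snd (e : G ≃* H × K) (hK : ∃ k₁ k₂ : K, k₁ * k₂ ≠ k₂ * k₁) :
    ∃ a b : G, ¬Commute ((ofMulEquiv e).snd a) ((ofMulEquiv e).snd b) := by
  obtain ⟨k₁, k₂, hne⟩ := hK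
  refine ⟨e.symm (1, k₁), e.symm (1, k₂), fun hcomm => hne ?_⟩
  simpa [ofMulEquiv] using congrArg (fun x => (e x).2) hcomm.eq

end Prod

end DirectSplitting

theorem stmt11_general (G : Type) [Group G] (hT : IsTau2 G)
    (hsc : ∀ (R : Type) [CommRing R], RingOfScalarsOn R G → Nonempty (R ≃+* ℤ)) :
    ∀ (H K : Type) [Group H] [Group K],
      (∃ h₁ h₂ : H, h₁ * h₂ ≠ h₂ * h₁) → (∃ k₁ k₂ : K, k₁ * k₂ ≠ k₂ * k₁) →
      IsEmpty (G ≃* H × K) := by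
  intro H K _ _ hH hK
  obtain ⟨-, hTF, hc⟩ := hT
  refine ⟨fun e => ?_⟩
  let d := DirectSplitting.ofMulEquiv e
  obtain ⟨φ⟩ := hsc (ℤ × ℤ) (d.toRingOfScalarsOn hc hTF
    (DirectSplitting.exists_not_commute_ofMulEquiv_fst e hH)
    (DirectSplitting.exists_not_commute_ofMulEquiv_snd e hK))
  have := φ.toMulEquiv.isDomain ℤ
  exact false_of_nontrivial_of_product_domain ℤ ℤ

/-- If G is a non-abelian τ₂-group every ring of scalars of which is
isomorphic to ℤ, then G is not isomorphic to a direct product H × K of two non-abelian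
groups. -/
theorem stmt11 (G : Type) [Group G] (hT : IsTau2 G)
    (hna : ∃ g h : G, g * h ≠ h * g)
    (hsc : ∀ (R : Type) [CommRing R], RingOfScalarsOn R G → Nonempty (R ≃+* ℤ)) :
    ∀ (H K : Type) [Group H] [Group K],
      (∃ h₁ h₂ : H, h₁ * h₂ ≠ h₂ * h₁) → (∃ k₁ k₂ : K, k₁ * k₂ ≠ k₂ * k₁) →
      IsEmpty (G ≃* H × K) :=
  stmt11_general G hT hsc
end

section
/- Fix integers n, m with m ≥ n−1 ≥ 1. For ℓ ≥ 1, consider all (2ℓ+1)^{m·n(n−1)/2} integer tuples λ = (λ_{t,i,j})_{1≤t≤m, 1≤i<j≤n} with |λ_{t,i,j}| ≤ ℓ for all t,i,j, and for each λ let G = G(n,m,λ) be the τ₂-presented group. Then the proportion of such tuples λ for which G simultaneously satisfies (i) Z(G) = ⟨c_1,…,c_m⟩, (ii) every a_k (k = 1,…,n) is c-small in G, and (iii) [a_i,a_j] ≠ 1 for all 1 ≤ i < j ≤ n, tends to 1 as ℓ → ∞. -/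
open scoped commutatorElement

/-- Index type for the pairs 1 ≤ i < j ≤ n. -/
abbrev PairIdx (n : ℕ) := {p : Fin n × Fin n // p.1 < p.2}

/-- A tuple λ = (λ_{t,i,j})_{1≤t≤m, 1≤i<j≤n} of integers, repackaged as a function
Fin m → Fin n → Fin n → ℤ (entries with i ≥ j are irrelevant and set to 0). -/
def lamOf {n m : ℕ} (μ : Fin m → PairIdx n → ℤ) : Fin m → Fin n → Fin n → ℤ :=
  fun t i j => if h : i < j then μ t ⟨(i, j), h⟩ else 0

/-!
The relations make `G = G(n,m,λ)` a central extension: the `c_t` are central and `G / ⟨c⟩` is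
abelian, generated by the images of the `a_i`. Mapping `G` onto `ℤⁿ × ℤᵐ` with multiplication
twisted by the bilinear form `β(v,w)_t = ∑_{i<j} λ_{t,i,j} v_i w_j` shows that `⟨c⟩` is exactly the
kernel of the exponent vector `v : G → ℤⁿ`. Now `g` commutes with `a_k` iff
`β(e_k, v g) = β(v g, e_k)`, a system of `m ≥ n - 1` linear equations in the `n - 1` coordinates of
`v g` off `k`. If for every `k` one of its `(n-1) × (n-1)` minors is nonzero, the centralizer of
`a_k` is `⟨a_k⟩ · ⟨c⟩`, which gives (i)–(iii). Such a minor is a nonzero polynomial of degree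
`n - 1` in distinct entries of `λ`, so by Schwartz–Zippel it vanishes on at most a `(n-1)/(2ℓ+1)`
fraction of the box; hence the good proportion is at least `1 - n(n-1)/(2ℓ+1)`.
-/
section ProdPow

variable {G H : Type*} [Group G] [Group H] {k : ℕ}

theorem map_prodPow (F : G →* H) (v : Fin k → G) (e : Fin k → ℤ) :
    F (prodPow v e) = prodPow (fun i => F (v i)) e := by
  simp [prodPow, map_list_prod, List.map_ofFn, Function.comp_def]

theorem prodPow_eq_prod {G : Type*} [CommGroup G] (v : Fin k → G) (e : Fin k → ℤ) :
    prodPow v e = ∏ i, v i ^ e i :=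
  List.prod_ofFn

theorem prodPow_mem {S : Subgroup G} {v : Fin k → G} (hv : ∀ i, v i ∈ S) (e : Fin k → ℤ) :
    prodPow v e ∈ S :=
  list_prod_mem <| by simpa [List.mem_ofFn] using fun i => zpow_mem (hv i) (e i)

end ProdPow

namespace Subgroup

variable {G : Type*} [Group G] {s : Set G}

theorem mem_center_of_closure_eq_top (hs : closure s = ⊤) {g : G}
    (hg : ∀ y ∈ s, Commute y g) : g ∈ center G := by
  rw [center_eq_iInf hs]
  simpa [mem_centralizer_singleton_iff] using fun y hy => (hg y hy).eq.symm

theorem isMulCommutative_of_closure_eq_top (hs : closure s = ⊤)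
    (hcomm : ∀ x ∈ s, ∀ y ∈ s, Commute x y) : IsMulCommutative G := by
  rw [← center_eq_top_iff, eq_top_iff, ← hs, closure_le]
  exact fun x hx => mem_center_of_closure_eq_top hs fun y hy => hcomm y hy x hx

end Subgroup

@[ext]
structure CentralExt {V W : Type*} [AddCommGroup V] [AddCommGroup W] (β : V →+ V →+ W) where
  v : V
  w : W

namespace CentralExt

variable {V W : Type*} [AddCommGroup V] [AddCommGroup W] {β : V →+ V →+ W}

instance : Group (CentralExt β) where
  mul x y := ⟨x.v + y.v, x.w + y.w + β x.v y.v⟩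
  one := ⟨0, 0⟩
  inv x := ⟨-x.v, -x.w + β x.v x.v⟩
  mul_assoc x y z := by
    ext
    · exact add_assoc _ _ _
    · show x.w + y.w + β x.v y.v + z.w + β (x.v + y.v) z.v
        = x.w + (y.w + z.w + β y.v z.v) + β x.v (y.v + z.v)
      simp only [map_add, AddMonoidHom.add_apply]; abel
  one_mul x := by
    ext
    · exact zero_add _
    · show 0 + x.w + β 0 x.v = x.w; simp
  mul_one x := by
    ext
    · exact add_zero _
    · show x.w + 0 + β x.v 0 = x.w; simp
  inv_mul_cancel x := by
    ext
    · exact neg_add_cancel _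
    · show -x.w + β x.v x.v + x.w + β (-x.v) x.v = 0; simp

@[simp] theorem mul_v (x y : CentralExt β) : (x * y).v = x.v + y.v := rfl
@[simp] theorem mul_w (x y : CentralExt β) : (x * y).w = x.w + y.w + β x.v y.v := rfl
@[simp] theorem one_v : (1 : CentralExt β).v = 0 := rfl
@[simp] theorem one_w : (1 : CentralExt β).w = 0 := rfl
@[simp] theorem inv_v (x : CentralExt β) : x⁻¹.v = -x.v := rfl
@[simp] theorem inv_w (x : CentralExt β) : x⁻¹.w = -x.w + β x.v x.v := rfl

theorem commutatorElement_eq (x y : CentralExt β) :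
    ⁅x, y⁆ = ⟨0, β x.v y.v - β y.v x.v⟩ := by
  ext
  · simp [commutatorElement_def]
  · simp [commutatorElement_def]; abel

theorem commute_iff {x y : CentralExt β} : Commute x y ↔ β x.v y.v = β y.v x.v := by
  rw [← commutatorElement_eq_one_iff_commute, commutatorElement_eq, CentralExt.ext_iff]
  simp [sub_eq_zero]

def projV : CentralExt β →* Multiplicative V where
  toFun x := .ofAdd x.v
  map_one' := rfl
  map_mul' _ _ := rfl

def inclW : Multiplicative W →* CentralExt β where
  toFun w := ⟨0, w.toAdd⟩
  map_one' := rfl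
  map_mul' _ _ := by ext <;> simp

end CentralExt

section Form

variable {n m : ℕ}

-- Only the entries with `i < j` occur in the relations, so only they enter the form; this makes
-- the model group available for every `lam`.
def tau2Form (lam : Fin m → Fin n → Fin n → ℤ) : (Fin n → ℤ) →+ (Fin n → ℤ) →+ (Fin m → ℤ) :=
  AddMonoidHom.mk'
    (fun v => AddMonoidHom.mk'
      (fun w t => ∑ i, ∑ j, (if i < j then lam t i j else 0) * v i * w j)
      fun w w' => by ext t; simp [mul_add, Finset.sum_add_distrib])
    fun v v' => by ext w t; simp [mul_add, add_mul, Finset.sum_add_distrib]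

theorem tau2Form_apply (lam : Fin m → Fin n → Fin n → ℤ) (v w : Fin n → ℤ) (t : Fin m) :
    tau2Form lam v w t = ∑ i, ∑ j, (if i < j then lam t i j else 0) * v i * w j :=
  rfl

theorem tau2Form_single_single (lam : Fin m → Fin n → Fin n → ℤ) (i j : Fin n) :
    tau2Form lam (Pi.single i 1) (Pi.single j 1) = fun t => if i < j then lam t i j else 0 := by
  ext t
  simp [tau2Form_apply, Pi.single_apply]

def AxisCentralizersCyclic (lam : Fin m → Fin n → Fin n → ℤ) : Prop :=
  ∀ (k : Fin n) (v : Fin n → ℤ),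
    tau2Form lam (Pi.single k 1) v = tau2Form lam v (Pi.single k 1) → v = Pi.single k (v k)

end Form

namespace Tau2Group

variable {n m : ℕ} {lam : Fin m → Fin n → Fin n → ℤ}

def modelGen (lam : Fin m → Fin n → Fin n → ℤ) : Fin n ⊕ Fin m → CentralExt (tau2Form lam) :=
  Sum.elim (fun i => ⟨Pi.single i 1, 0⟩) (fun t => ⟨0, Pi.single t 1⟩)

theorem prodPow_modelGen_inr (e : Fin m → ℤ) :
    prodPow (fun t => modelGen lam (.inr t)) e = ⟨0, e⟩ := by
  have : (fun t => modelGen lam (.inr t)) = fun t => CentralExt.inclW (.ofAdd (Pi.single t 1)) :=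
    rfl
  rw [this, ← map_prodPow, prodPow_eq_prod]
  simp only [← ofAdd_zsmul, ← ofAdd_sum, ← pi_eq_sum_univ']
  rfl

theorem lift_modelGen_of_mem_rels :
    ∀ r ∈ tau2Rels n m lam, FreeGroup.lift (modelGen lam) r = 1 := by
  rintro r (⟨i, j, hij, rfl⟩ | ⟨i, t, rfl⟩ | ⟨t, s, rfl⟩)
  · rw [map_mul, map_inv, map_commutatorElement, map_prodPow, mul_inv_eq_one]
    simp only [FreeGroup.lift_apply_of, prodPow_modelGen_inr, CentralExt.commutatorElement_eq]
    ext t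
    · rfl
    · simp [modelGen, tau2Form_single_single, hij, hij.not_gt]
  all_goals
    rw [map_commutatorElement, commutatorElement_eq_one_iff_commute, CentralExt.commute_iff]
    simp [modelGen]

def toModel : Tau2Group n m lam →* CentralExt (tau2Form lam) :=
  PresentedGroup.toGroup lift_modelGen_of_mem_rels

@[simp]
theorem toModel_tau2a (i : Fin n) : toModel (tau2a i : Tau2Group n m lam) = ⟨Pi.single i 1, 0⟩ :=
  PresentedGroup.toGroup.of _

@[simp]
theorem toModel_tau2c (t : Fin m) : toModel (tau2c t : Tau2Group n m lam) = ⟨0, Pi.single t 1⟩ :=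
  PresentedGroup.toGroup.of _

variable (n m lam) in
def cSpan : Subgroup (Tau2Group n m lam) :=
  Subgroup.closure (Set.range tau2c)

theorem commutatorElement_tau2a {i j : Fin n} (hij : i < j) :
    ⁅(tau2a i : Tau2Group n m lam), (tau2a j : Tau2Group n m lam)⁆ =
      prodPow tau2c (fun t => lam t i j) := by
  have := PresentedGroup.mk_eq_mk_of_mul_inv_mem (rels := tau2Rels n m lam)
    (x := ⁅FreeGroup.of (Sum.inl i), FreeGroup.of (Sum.inl j)⁆)
    (y := prodPow (fun t => FreeGroup.of (Sum.inr t)) fun t => lam t i j) (Or.inl ⟨i, j, hij, rfl⟩)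
  rw [map_commutatorElement, map_prodPow] at this
  exact this

def gen : Fin n ⊕ Fin m → Tau2Group n m lam :=
  Sum.elim tau2a tau2c

theorem closure_range_gen : Subgroup.closure (Set.range (gen : _ → Tau2Group n m lam)) = ⊤ := by
  rw [show (gen : _ → Tau2Group n m lam) = PresentedGroup.of from
    funext (Sum.rec (fun _ => rfl) (fun _ => rfl))]
  exact PresentedGroup.closure_range_of _

theorem hom_ext {H : Type*} [Group H] {f g : Tau2Group n m lam →* H}
    (h : ∀ x, f (gen x) = g (gen x)) : f = g :=
  PresentedGroup.ext (Sum.rec (fun i => h (.inl i)) (fun t => h (.inr t)))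

theorem tau2c_commute_gen (t : Fin m) (x : Fin n ⊕ Fin m) :
    Commute (tau2c t : Tau2Group n m lam) (gen x) := by
  rcases x with i | s
  · exact (commutatorElement_eq_one_iff_commute.1
      (PresentedGroup.one_of_mem (Or.inr (Or.inl ⟨i, t, rfl⟩)))).symm
  · exact commutatorElement_eq_one_iff_commute.1
      (PresentedGroup.one_of_mem (Or.inr (Or.inr ⟨t, s, rfl⟩)))

theorem tau2c_mem_center (t : Fin m) : (tau2c t : Tau2Group n m lam) ∈ Subgroup.center _ :=
  Subgroup.mem_center_of_closure_eq_top closure_range_gen <| by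
    rintro _ ⟨x, rfl⟩
    exact (tau2c_commute_gen t x).symm

theorem cSpan_le_center : cSpan n m lam ≤ Subgroup.center _ :=
  (Subgroup.closure_le _).2 (Set.range_subset_iff.2 tau2c_mem_center)

instance : (cSpan n m lam).Normal :=
  ⟨fun a ha g => by rwa [(Subgroup.mem_center_iff.1 (cSpan_le_center ha) g), mul_inv_cancel_right]⟩

theorem tau2c_mem_cSpan (t : Fin m) : (tau2c t : Tau2Group n m lam) ∈ cSpan n m lam :=
  Subgroup.subset_closure (Set.mem_range_self t)

theorem prodPow_tau2c_mem_cSpan (e : Fin m → ℤ) :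
    prodPow (tau2c : _ → Tau2Group n m lam) e ∈ cSpan n m lam :=
  prodPow_mem tau2c_mem_cSpan e

theorem commutatorElement_gen_mem_cSpan (x y : Fin n ⊕ Fin m) :
    ⁅(gen x : Tau2Group n m lam), gen y⁆ ∈ cSpan n m lam := by
  rcases x with i | t
  · rcases y with j | t
    · rcases lt_trichotomy i j with hij | rfl | hji
      · exact commutatorElement_tau2a hij ▸ prodPow_tau2c_mem_cSpan _
      · simp [gen]
      · rw [← commutatorElement_inv]
        exact inv_mem (commutatorElement_tau2a hji ▸ prodPow_tau2c_mem_cSpan _)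
    · exact (commutatorElement_eq_one_iff_commute.2 (tau2c_commute_gen t (.inl i)).symm) ▸
        one_mem _
  · exact (commutatorElement_eq_one_iff_commute.2 (tau2c_commute_gen t y)) ▸ one_mem _

theorem isMulCommutative_quotient_cSpan :
    IsMulCommutative (Tau2Group n m lam ⧸ cSpan n m lam) := by
  refine Subgroup.isMulCommutative_of_closure_eq_top
    (s := QuotientGroup.mk' _ '' Set.range gen) ?_ ?_
  · rw [← MonoidHom.map_closure, closure_range_gen, ← MonoidHom.range_eq_map,
      QuotientGroup.range_mk']
  · rintro _ ⟨_, ⟨x, rfl⟩, rfl⟩ _ ⟨_, ⟨y, rfl⟩, rfl⟩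
    rw [← commutatorElement_eq_one_iff_commute, ← map_commutatorElement,
      QuotientGroup.mk'_apply, QuotientGroup.eq_one_iff]
    exact commutatorElement_gen_mem_cSpan x y

open scoped IsMulCommutative in
theorem ker_le_cSpan : (CentralExt.projV.comp toModel).ker ≤ cSpan n m lam := by
  have := isMulCommutative_quotient_cSpan (n := n) (m := m) (lam := lam)
  -- `θ` sends `e_i` to `a_i`; it exists because the quotient is abelian.
  let θ : Multiplicative (Fin n → ℤ) →* Tau2Group n m lam ⧸ cSpan n m lam :=
    { toFun v := ∏ i, (QuotientGroup.mk (tau2a i : Tau2Group n m lam) : _ ⧸ cSpan n m lam) ^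
        v.toAdd i
      map_one' := by simp
      map_mul' v w := by simp [zpow_add, Finset.prod_mul_distrib] }
  have hθ : θ.comp (CentralExt.projV.comp toModel) = QuotientGroup.mk' _ := by
    refine hom_ext fun x => ?_
    rcases x with i | t
    · simp [θ, CentralExt.projV, gen, Pi.single_apply]
    · simp only [θ, CentralExt.projV, gen]
      simpa using ((QuotientGroup.eq_one_iff _).2 (tau2c_mem_cSpan t)).symm
  intro x hx
  rw [← QuotientGroup.eq_one_iff, ← QuotientGroup.mk'_apply, ← hθ, MonoidHom.comp_apply, hx,
    map_one]

theorem tau2Form_toModel_of_commute {k : Fin n} {x : Tau2Group n m lam}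
    (hx : Commute (tau2a k) x) :
    tau2Form lam (Pi.single k 1) (toModel x).v = tau2Form lam (toModel x).v (Pi.single k 1) := by
  simpa using CentralExt.commute_iff.1 (hx.map toModel)

theorem exists_eq_zpow_mul_of_toModel_v {k : Fin n} {s : ℤ} {x : Tau2Group n m lam}
    (hx : (toModel x).v = Pi.single k s) : ∃ z ∈ cSpan n m lam, x = tau2a k ^ s * z := by
  refine ⟨(tau2a k ^ s)⁻¹ * x, ker_le_cSpan ?_, by group⟩
  rw [MonoidHom.mem_ker, MonoidHom.comp_apply, map_mul, map_inv, map_zpow, map_mul, map_inv,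
    map_zpow]
  simp [CentralExt.projV, hx, ← ofAdd_zsmul, ← Pi.single_smul]

theorem isCSmall_tau2a (h : AxisCentralizersCyclic lam) (k : Fin n) :
    IsCSmall (tau2a k : Tau2Group n m lam) := by
  intro x
  constructor
  · intro hx
    have hv := h k _
      (tau2Form_toModel_of_commute (Subgroup.mem_centralizer_singleton_iff.1 hx).symm)
    obtain ⟨z, hz, hxz⟩ := exists_eq_zpow_mul_of_toModel_v hv
    exact ⟨_, z, cSpan_le_center hz, hxz⟩
  · rintro ⟨t, z, hz, rfl⟩
    exact Subgroup.mem_centralizer_singleton_iff.2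
      (((Commute.refl _).zpow_left t).mul_left (Subgroup.mem_center_iff.1 hz _).symm).eq

theorem center_eq_cSpan (h : AxisCentralizersCyclic lam) (hn : 2 ≤ n) :
    Subgroup.center (Tau2Group n m lam) = cSpan n m lam := by
  refine le_antisymm (fun x hx => ?_) cSpan_le_center
  have := Fin.nontrivial_iff_two_le.2 hn
  obtain ⟨k, l, hkl⟩ := exists_pair_ne (Fin n)
  have hv (k : Fin n) := h k _ (tau2Form_toModel_of_commute (Subgroup.mem_center_iff.1 hx _))
  have hv0 : (toModel x).v = Pi.single k 0 := by
    rw [hv k, hv l]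
    simp [hkl]
  obtain ⟨z, hz, rfl⟩ := exists_eq_zpow_mul_of_toModel_v hv0
  simpa using hz

theorem commutatorElement_tau2a_ne_one (h : AxisCentralizersCyclic lam) {i j : Fin n}
    (hij : i ≠ j) : ⁅(tau2a i : Tau2Group n m lam), (tau2a j : Tau2Group n m lam)⁆ ≠ 1 := by
  intro h1
  have := h i (Pi.single j 1) (by
    simpa using tau2Form_toModel_of_commute (commutatorElement_eq_one_iff_commute.1 h1))
  simpa [hij.symm] using congrFun this j

end Tau2Group

section AxisMatrix

variable {n m : ℕ}

theorem tau2Form_single_left (lam : Fin m → Fin n → Fin n → ℤ) (k : Fin n) (v : Fin n → ℤ)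
    (t : Fin m) :
    tau2Form lam (Pi.single k 1) v t = ∑ j, (if k < j then lam t k j else 0) * v j := by
  simp [tau2Form_apply, Pi.single_apply]

theorem tau2Form_single_right (lam : Fin m → Fin n → Fin n → ℤ) (k : Fin n) (v : Fin n → ℤ)
    (t : Fin m) :
    tau2Form lam v (Pi.single k 1) t = ∑ i, (if i < k then lam t i k else 0) * v i := by
  simp [tau2Form_apply, Pi.single_apply, mul_comm]

def pairWith (k : Fin n) (i : {i // i ≠ k}) : PairIdx n :=
  if h : i.1 < k then ⟨(i.1, k), h⟩ else ⟨(k, i.1), lt_of_le_of_ne (not_lt.1 h) (Ne.symm i.2)⟩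

theorem pairWith_injective (k : Fin n) : Function.Injective (pairWith k) := by
  intro i j h
  unfold pairWith at h
  split_ifs at h <;> simp_all [Subtype.ext_iff]

theorem tau2Form_lamOf_single_sub (μ : Fin m → PairIdx n → ℤ) (k : Fin n) (v : Fin n → ℤ)
    (t : Fin m) :
    tau2Form (lamOf μ) (Pi.single k 1) v t - tau2Form (lamOf μ) v (Pi.single k 1) t =
      ∑ i : {i // i ≠ k}, ((if i.1 < k then -1 else 1) * v i) * μ t (pairWith k i) := by
  rw [tau2Form_single_left, tau2Form_single_right, ← Finset.sum_sub_distrib,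
    ← Finset.sum_erase (a := k) _ (by simp), Finset.sum_subtype (p := (· ≠ k)) _ (by simp)]
  refine Finset.sum_congr rfl fun ⟨i, hik⟩ _ => ?_
  rcases hik.lt_or_gt with h | h <;> simp [lamOf, pairWith, h, h.not_gt, mul_comm]

variable (k : Fin n) (σ : {i // i ≠ k} ↪ Fin m)

def axisMatrix (μ : Fin m → PairIdx n → ℤ) : Matrix {i // i ≠ k} {i // i ≠ k} ℤ :=
  Matrix.of fun i j => μ (σ j) (pairWith k i)

theorem eq_single_of_det_axisMatrix_ne_zero {μ : Fin m → PairIdx n → ℤ}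
    (hdet : (axisMatrix k σ μ).det ≠ 0) {v : Fin n → ℤ}
    (hv : tau2Form (lamOf μ) (Pi.single k 1) v = tau2Form (lamOf μ) v (Pi.single k 1)) :
    v = Pi.single k (v k) := by
  set u : {i // i ≠ k} → ℤ := fun i => (if i.1 < k then -1 else 1) * v i
  have hu : Matrix.vecMul u (axisMatrix k σ μ) = 0 := by
    ext j
    rw [Pi.zero_apply, ← sub_eq_zero.2 (congrFun hv (σ j)), tau2Form_lamOf_single_sub]
    rfl
  have hu0 := Matrix.eq_zero_of_vecMul_eq_zero hdet hu
  ext i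
  by_cases hi : i = k
  · simp [hi]
  · have hui : u ⟨i, hi⟩ = 0 := congrFun hu0 ⟨i, hi⟩
    simpa [hi] using (mul_eq_zero.1 hui).resolve_left (by split_ifs <;> simp)

theorem axisCentralizersCyclic_lamOf {μ : Fin m → PairIdx n → ℤ}
    (σ : ∀ k : Fin n, {i // i ≠ k} ↪ Fin m) (hdet : ∀ k, (axisMatrix k (σ k) μ).det ≠ 0) :
    AxisCentralizersCyclic (lamOf μ) :=
  fun k _ hv => eq_single_of_det_axisMatrix_ne_zero k (σ k) (hdet k) hv

end AxisMatrix

section Polynomial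

open MvPolynomial

theorem Matrix.totalDegree_det_mvPolynomialX_le (κ R : Type*) [Fintype κ] [DecidableEq κ]
    [CommRing R] [Nontrivial R] :
    (Matrix.mvPolynomialX κ κ R).det.totalDegree ≤ Fintype.card κ := by
  rw [Matrix.det_apply]
  refine (totalDegree_finsetSum _ _).trans (Finset.sup_le fun π _ => ?_)
  refine (totalDegree_smul_le _ _).trans ((totalDegree_finsetProd _ _).trans ?_)
  simp

variable {n m : ℕ} (k : Fin n) (σ : {i // i ≠ k} ↪ Fin m)

noncomputable def axisPoly : MvPolynomial (Fin m × PairIdx n) ℤ :=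
  rename (fun p : {i // i ≠ k} × {i // i ≠ k} => (σ p.2, pairWith k p.1))
    (Matrix.mvPolynomialX _ _ ℤ).det

theorem eval_axisPoly (x : Fin m × PairIdx n → ℤ) :
    eval x (axisPoly k σ) = (axisMatrix k σ (Function.curry x)).det := by
  rw [axisPoly, eval_rename, Matrix.eval_det_mvPolynomialX]
  rfl

theorem axisPoly_ne_zero : axisPoly k σ ≠ 0 := by
  have hinj : Function.Injective fun p : {i // i ≠ k} × {i // i ≠ k} => (σ p.2, pairWith k p.1) :=
    fun p q h => Prod.ext (pairWith_injective k (congrArg Prod.snd h))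
      (σ.injective (congrArg Prod.fst h))
  intro h
  exact Matrix.det_mvPolynomialX_ne_zero _ ℤ (rename_injective _ hinj (h.trans (map_zero _).symm))

theorem totalDegree_axisPoly_le : (axisPoly k σ).totalDegree ≤ n - 1 :=
  (totalDegree_rename_le _ _).trans <|
    (Matrix.totalDegree_det_mvPolynomialX_le _ ℤ).trans (by simp)

end Polynomial

section Density

open MvPolynomial Finset

theorem MvPolynomial.card_filter_eval_eq_zero_div_le {σ R : Type*} [Fintype σ] [DecidableEq σ]
    [CommRing R] [IsDomain R] [DecidableEq R] {p : MvPolynomial σ R} (hp : p ≠ 0) (S : Finset R) :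
    (#{x ∈ Fintype.piFinset fun _ : σ => S | eval x p = 0} : ℚ≥0) / #S ^ Fintype.card σ ≤
      p.totalDegree / #S := by
  let e := Fintype.equivFin σ
  have hp' : rename e p ≠ 0 := fun h =>
    hp (rename_injective _ e.injective (h.trans (map_zero _).symm))
  refine le_trans (le_of_eq ?_) ((schwartz_zippel_totalDegree hp' S).trans ?_)
  · congr 2
    refine card_bij' (fun x _ => x ∘ e.symm) (fun y _ => y ∘ e) ?_ ?_ ?_ ?_
    all_goals intro x; simp +contextual [eval_rename, Function.comp_def]
  · gcongr
    exact totalDegree_rename_le _ _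

open Filter Topology

variable {σ : Type*} [Fintype σ] [DecidableEq σ]

variable (σ) in
noncomputable def intBox (ℓ : ℕ) : Finset (σ → ℤ) :=
  Fintype.piFinset fun _ => Icc (-(ℓ : ℤ)) ℓ

theorem card_Icc_neg_natCast (ℓ : ℕ) : #(Icc (-(ℓ : ℤ)) ℓ) = 2 * ℓ + 1 := by
  rw [Int.card_Icc]
  omega

theorem card_intBox (ℓ : ℕ) : #(intBox σ ℓ) = (2 * ℓ + 1) ^ Fintype.card σ := by
  rw [intBox, Fintype.card_piFinset, prod_const, card_Icc_neg_natCast, card_univ]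

theorem card_filter_eval_eq_zero_intBox_div_le {p : MvPolynomial σ ℤ} (hp : p ≠ 0) (ℓ : ℕ) :
    (#{x ∈ intBox σ ℓ | eval x p = 0} : ℝ) / (2 * ℓ + 1) ^ Fintype.card σ ≤
      p.totalDegree / (2 * ℓ + 1) := by
  have h := card_filter_eval_eq_zero_div_le hp (Icc (-(ℓ : ℤ)) ℓ)
  rw [card_Icc_neg_natCast] at h
  have h' := NNRat.cast_le (K := ℝ) |>.2 h
  push_cast at h'
  exact h'

theorem one_sub_div_le_card_filter_div {κ : Type*} [Fintype κ] {P : κ → MvPolynomial σ ℤ}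
    (hP : ∀ k, P k ≠ 0) {d : ℕ} (hd : ∀ k, (P k).totalDegree ≤ d) {good : (σ → ℤ) → Prop}
    [DecidablePred good] (hgood : ∀ x, (∀ k, eval x (P k) ≠ 0) → good x) (ℓ : ℕ) :
    1 - (Fintype.card κ * d : ℝ) / (2 * ℓ + 1) ≤
      #{x ∈ intBox σ ℓ | good x} / (2 * ℓ + 1) ^ Fintype.card σ := by
  have hB : (0 : ℝ) < (2 * ℓ + 1) ^ Fintype.card σ := by positivity
  have hcover : intBox σ ℓ ⊆
      {x ∈ intBox σ ℓ | good x} ∪ univ.biUnion fun k => {x ∈ intBox σ ℓ | eval x (P k) = 0} := by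
    intro x hx
    by_cases h : ∀ k, eval x (P k) ≠ 0
    · exact mem_union_left _ (mem_filter.2 ⟨hx, hgood x h⟩)
    · obtain ⟨k, hk⟩ := not_forall_not.1 h
      exact mem_union_right _ (mem_biUnion.2 ⟨k, mem_univ _, mem_filter.2 ⟨hx, hk⟩⟩)
  have hcard : (#(intBox σ ℓ) : ℝ) ≤
      #{x ∈ intBox σ ℓ | good x} + ∑ k, #{x ∈ intBox σ ℓ | eval x (P k) = 0} := by
    exact_mod_cast (card_le_card hcover).trans ((card_union_le _ _).trans
      (Nat.add_le_add_left card_biUnion_le _))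
  have hZ (k : κ) : (#{x ∈ intBox σ ℓ | eval x (P k) = 0} : ℝ) / (2 * ℓ + 1) ^ Fintype.card σ ≤
      d / (2 * ℓ + 1) :=
    (card_filter_eval_eq_zero_intBox_div_le (hP k) ℓ).trans (by gcongr; exact_mod_cast hd k)
  rw [card_intBox] at hcard
  push_cast at hcard
  have hsum : (∑ k, #{x ∈ intBox σ ℓ | eval x (P k) = 0} : ℝ) / (2 * ℓ + 1) ^ Fintype.card σ ≤
      Fintype.card κ * (d / (2 * ℓ + 1)) := by
    simpa [Finset.sum_div] using Finset.sum_le_sum fun k (_ : k ∈ univ) => hZ k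
  calc 1 - (Fintype.card κ * d : ℝ) / (2 * ℓ + 1)
      ≤ 1 - (∑ k, #{x ∈ intBox σ ℓ | eval x (P k) = 0} : ℝ) / (2 * ℓ + 1) ^ Fintype.card σ := by
        rw [mul_div_assoc]
        linarith
    _ ≤ #{x ∈ intBox σ ℓ | good x} / (2 * ℓ + 1) ^ Fintype.card σ := by
        rw [sub_le_iff_le_add, ← add_div, le_div_iff₀ hB]
        linarith

theorem tendsto_card_filter_intBox_div {κ : Type*} [Fintype κ] {P : κ → MvPolynomial σ ℤ}
    (hP : ∀ k, P k ≠ 0) {d : ℕ} (hd : ∀ k, (P k).totalDegree ≤ d) {good : (σ → ℤ) → Prop}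
    [DecidablePred good] (hgood : ∀ x, (∀ k, eval x (P k) ≠ 0) → good x) :
    Tendsto (fun ℓ : ℕ => (#{x ∈ intBox σ ℓ | good x} : ℝ) / (2 * ℓ + 1) ^ Fintype.card σ)
      atTop (𝓝 1) := by
  have hlower : Tendsto (fun ℓ : ℕ => 1 - (Fintype.card κ * d : ℝ) / (2 * ℓ + 1)) atTop (𝓝 1) := by
    have h2 : Tendsto (fun ℓ : ℕ => (2 * ℓ + 1 : ℝ)) atTop atTop :=
      tendsto_atTop_add_const_right _ _ (tendsto_natCast_atTop_atTop.const_mul_atTop two_pos)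
    simpa using tendsto_const_nhds.sub (tendsto_const_nhds.div_atTop h2)
  refine tendsto_of_tendsto_of_tendsto_of_le_of_le hlower tendsto_const_nhds
    (one_sub_div_le_card_filter_div hP hd hgood) fun ℓ => ?_
  rw [div_le_one (by positivity)]
  have : #{x ∈ intBox σ ℓ | good x} ≤ (2 * ℓ + 1) ^ Fintype.card σ :=
    (card_filter_le _ _).trans (card_intBox ℓ).le
  exact (Nat.cast_le.2 this).trans_eq (by norm_num)

theorem ncard_setOf_abs_le_and {α β : Type*} [Fintype α] [DecidableEq α] [Fintype β]
    [DecidableEq β] (Q : (α → β → ℤ) → Prop) [DecidablePred Q] (ℓ : ℕ) :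
    {μ : α → β → ℤ | (∀ a b, |μ a b| ≤ (ℓ : ℤ)) ∧ Q μ}.ncard =
      #{x ∈ intBox (α × β) ℓ | Q (Function.curry x)} := by
  rw [← Set.ncard_coe_finset]
  refine Set.ncard_congr (fun μ _ => Function.uncurry μ) ?_ ?_ ?_
  · rintro μ ⟨hμ, hQ⟩
    simpa [intBox, abs_le] using ⟨fun a b => abs_le.1 (hμ a b), hQ⟩
  · intro μ ν _ _ h
    exact Function.uncurry_injective h
  · intro x hx
    simp only [coe_filter, Set.mem_ofPred_eq, intBox, Fintype.mem_piFinset, mem_Icc] at hx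
    exact ⟨Function.curry x, ⟨fun a b => abs_le.2 (hx.1 (a, b)), hx.2⟩, Function.uncurry_curry x⟩

end Density

theorem card_pairIdx (n : ℕ) : Fintype.card (PairIdx n) = n * (n - 1) / 2 := by
  have h := Sym2.card_subtype_not_diag (α := Fin n)
  rw [Fintype.card_fin] at h
  rw [← Nat.choose_two_right, ← h]
  refine Fintype.card_of_bijective
    (f := fun p : PairIdx n => ⟨s(p.1.1, p.1.2), by simpa using p.2.ne⟩) ⟨?_, ?_⟩
  · rintro ⟨⟨a, b⟩, hab⟩ ⟨⟨c, d⟩, hcd⟩ h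
    simp only [Subtype.mk.injEq, Sym2.eq_iff] at h
    rcases h with ⟨rfl, rfl⟩ | ⟨rfl, rfl⟩
    · rfl
    · exact absurd (hab.trans hcd) (lt_irrefl _)
  · rintro ⟨z, hz⟩
    induction z using Sym2.ind with
    | h a b =>
      rcases lt_or_gt_of_ne (Sym2.mk_isDiag_iff.not.1 hz) with hab | hba
      · exact ⟨⟨(a, b), hab⟩, rfl⟩
      · exact ⟨⟨(b, a), hba⟩, Subtype.ext Sym2.eq_swap⟩

/-- Fix n, m with m ≥ n−1 ≥ 1. Among the (2ℓ+1)^{m·n(n−1)/2} tuples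
λ = (λ_{t,i,j}) with |λ_{t,i,j}| ≤ ℓ, the proportion of those for which the τ₂-presented
group G = G(n,m,λ) satisfies (i) Z(G) = ⟨c₁,…,cₘ⟩, (ii) every a_k is c-small, and
(iii) [aᵢ,aⱼ] ≠ 1 for all i < j, tends to 1 as ℓ → ∞. -/
theorem stmt14 (n m : ℕ) (hn : 2 ≤ n) (hm : n - 1 ≤ m) :
    Filter.Tendsto (fun ℓ : ℕ =>
      (Set.ncard {μ : Fin m → PairIdx n → ℤ |
          (∀ t p, |μ t p| ≤ (ℓ : ℤ)) ∧
          (Subgroup.center (Tau2Group n m (lamOf μ)) =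
              Subgroup.closure (Set.range (@tau2c n m (lamOf μ))) ∧
            (∀ k : Fin n, IsCSmall (@tau2a n m (lamOf μ) k)) ∧
            (∀ i j : Fin n, i < j →
              ⁅@tau2a n m (lamOf μ) i, @tau2a n m (lamOf μ) j⁆ ≠ 1))} : ℝ) /
        (2 * (ℓ : ℝ) + 1) ^ (m * (n * (n - 1) / 2)))
      Filter.atTop (nhds 1) := by
  classical
  have σ (k : Fin n) : {i // i ≠ k} ↪ Fin m :=
    (Function.Embedding.nonempty_of_card_le (by simpa using hm)).some
  have hE : m * (n * (n - 1) / 2) = Fintype.card (Fin m × PairIdx n) := by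
    simp [card_pairIdx]
  simp only [ncard_setOf_abs_le_and, hE]
  refine tendsto_card_filter_intBox_div (fun k => axisPoly_ne_zero k (σ k))
    (fun k => totalDegree_axisPoly_le k (σ k)) fun x hx => ?_
  have h := axisCentralizersCyclic_lamOf σ fun k => eval_axisPoly k (σ k) x ▸ hx k
  exact ⟨Tau2Group.center_eq_cSpan h hn, Tau2Group.isCSmall_tau2a h,
    fun i j hij => Tau2Group.commutatorElement_tau2a_ne_one h hij.ne⟩
end
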